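/- Let p_j denote the j-th prime number. There exists an absolute constant C > 0 such that for all α in the interval (log 2/log 3, 1) and all integers r ≥ 4, ∏_{j=4}^{r} (1 − 2 p_j^{−α})^{−2} ≤ exp( (C/(1−α)) · r^{1−α} ). -/

import Mathlib

/-!
Once `α ≥ 1/2` (which `α > log 2 / log 3` guarantees) and `p_j ≥ 7`, we have `2 p_j^{-α} ≤ 4/5`,
so `-log (1 - x) ≤ x / (1 - x)` bounds each factor by `exp (20 p_j^{-α}) ≤ exp (20 j^{-α})`.
The sum `∑_{j ≤ r} j^{-α}` telescopes against the increments of `t^{1-α} / (1-α)`, by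
Bernoulli's inequality for the concave power `t ↦ t^{1-α}`.
-/

open Finset Real

lemma inv_one_sub_le_exp_div {x c : ℝ} (hx : 0 ≤ x) (hc : 0 < c) (hxc : x ≤ 1 - c) :
    (1 - x)⁻¹ ≤ exp (x / c) := by
  have hpos : 0 < 1 - x := by linarith
  calc (1 - x)⁻¹ = exp (-log (1 - x)) := by rw [exp_neg, exp_log hpos]
    _ ≤ exp (x / (1 - x)) := by
        gcongr
        have hlog := one_sub_inv_le_log_of_pos hpos
        have hinv : (1 - x)⁻¹ - 1 = x / (1 - x) := by field_simp; ring
        linarith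
    _ ≤ exp (x / c) := by gcongr; linarith

lemma sq_inv_one_sub_two_mul_le_exp {y : ℝ} (hy0 : 0 ≤ y) (hy : y ≤ 2 / 5) :
    ((1 - 2 * y)⁻¹) ^ 2 ≤ exp (20 * y) := by
  have hinv : (1 - 2 * y)⁻¹ ≤ exp (2 * y / (1 / 5)) :=
    inv_one_sub_le_exp_div (by positivity) (by norm_num) (by linarith)
  calc ((1 - 2 * y)⁻¹) ^ 2 ≤ exp (2 * y / (1 / 5)) ^ 2 :=
        pow_le_pow_left₀ (inv_nonneg.2 (by linarith)) hinv 2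
    _ = exp (20 * y) := by rw [← exp_nat_mul]; ring_nf

lemma mul_rpow_sub_one_le_rpow_sub_rpow {t β : ℝ} (ht : 1 ≤ t) (hβ0 : 0 ≤ β) (hβ1 : β ≤ 1) :
    β * t ^ (β - 1) ≤ t ^ β - (t - 1) ^ β := by
  have ht0 : 0 < t := by linarith
  have hinv : t⁻¹ ≤ 1 := inv_le_one_of_one_le₀ ht
  have bernoulli : (1 + -t⁻¹) ^ β ≤ 1 + β * -t⁻¹ :=
    rpow_one_add_le_one_add_mul_self (by linarith) hβ0 hβ1
  have hsplit : (t - 1) ^ β = t ^ β * (1 + -t⁻¹) ^ β := by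
    rw [← mul_rpow ht0.le (by linarith)]
    congr 1
    field_simp
    ring
  have htβ : 0 < t ^ β := rpow_pos_of_pos ht0 β
  rw [hsplit, rpow_sub_one ht0.ne']
  calc β * (t ^ β / t) = t ^ β - t ^ β * (1 + β * -t⁻¹) := by field_simp; ring
    _ ≤ t ^ β - t ^ β * (1 + -t⁻¹) ^ β := by gcongr

lemma sum_Icc_rpow_neg_le {α : ℝ} (hα0 : 0 ≤ α) (hα1 : α < 1) (n : ℕ) :
    ∑ j ∈ Icc 1 n, (j : ℝ) ^ (-α) ≤ (n : ℝ) ^ (1 - α) / (1 - α) := by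
  have hβ : 0 < 1 - α := by linarith
  induction n with
  | zero => simp [zero_rpow hβ.ne']
  | succ n ih =>
    have step := mul_rpow_sub_one_le_rpow_sub_rpow (t := (n : ℝ) + 1)
      (by linarith [n.cast_nonneg (α := ℝ)]) hβ.le (by linarith)
    rw [sub_sub_cancel_left, add_sub_cancel_right] at step
    rw [le_div_iff₀ hβ] at ih ⊢
    rw [sum_Icc_succ_top (by omega), add_mul]
    push_cast
    linarith

lemma cast_le_nth_prime_pred (j : ℕ) : (j : ℝ) ≤ Nat.nth Nat.Prime (j - 1) := by
  have := Nat.add_two_le_nth_prime (j - 1)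
  exact_mod_cast (by omega : j ≤ Nat.nth Nat.Prime (j - 1))

lemma seven_le_nth_prime {n : ℕ} (hn : 3 ≤ n) : 7 ≤ Nat.nth Nat.Prime n :=
  Nat.nth_prime_three_eq_seven ▸ Nat.nth_monotone Nat.infinite_setOfPred_prime hn

lemma rpow_neg_le_two_fifths {p α : ℝ} (hp : 7 ≤ p) (hα : 1 / 2 ≤ α) : p ^ (-α) ≤ 2 / 5 := by
  have hsqrt : 5 / 2 ≤ √p := (le_sqrt (by norm_num) (by linarith)).2 (by linarith)
  calc p ^ (-α) ≤ p ^ (-(1 / 2 : ℝ)) := rpow_le_rpow_of_exponent_le (by linarith) (by linarith)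
    _ = (√p)⁻¹ := by rw [rpow_neg (by linarith), sqrt_eq_rpow]
    _ ≤ (5 / 2)⁻¹ := inv_anti₀ (by norm_num) hsqrt
    _ = 2 / 5 := by norm_num

lemma half_lt_log_two_div_log_three : 1 / 2 < log 2 / log 3 := by
  rw [lt_div_iff₀ (log_pos (by norm_num))]
  have h34 : log 3 < log 4 := log_lt_log (by norm_num) (by norm_num)
  have h4 : log 4 = 2 * log 2 := by
    rw [show (4 : ℝ) = 2 ^ 2 by norm_num, log_pow]; push_cast; ring
  linarith

theorem prod_Icc_inv_one_sub_two_mul_nth_prime_rpow_sq_le {α : ℝ} (hα0 : 1 / 2 ≤ α)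
    (hα1 : α < 1) (r : ℕ) :
    ∏ j ∈ Icc 4 r, ((1 - 2 * (Nat.nth Nat.Prime (j - 1) : ℝ) ^ (-α))⁻¹) ^ 2
      ≤ exp (20 / (1 - α) * (r : ℝ) ^ (1 - α)) := by
  have factor : ∀ j ∈ Icc 4 r, ((1 - 2 * (Nat.nth Nat.Prime (j - 1) : ℝ) ^ (-α))⁻¹) ^ 2
      ≤ exp (20 * (j : ℝ) ^ (-α)) := by
    intro j hj
    have hj4 := (mem_Icc.1 hj).1
    have hp7 : (7 : ℝ) ≤ Nat.nth Nat.Prime (j - 1) := by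
      exact_mod_cast seven_le_nth_prime (by omega : 3 ≤ j - 1)
    calc _ ≤ exp (20 * (Nat.nth Nat.Prime (j - 1) : ℝ) ^ (-α)) :=
          sq_inv_one_sub_two_mul_le_exp (by positivity) (rpow_neg_le_two_fifths hp7 hα0)
      _ ≤ exp (20 * (j : ℝ) ^ (-α)) := by
          have hj0 : (0 : ℝ) < j := by positivity
          have hpj := rpow_le_rpow_of_nonpos hj0 (cast_le_nth_prime_pred j) (by linarith : -α ≤ 0)
          exact exp_le_exp.2 (by linarith)
  calc _ ≤ ∏ j ∈ Icc 4 r, exp (20 * (j : ℝ) ^ (-α)) :=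
        prod_le_prod (fun _ _ => sq_nonneg _) factor
    _ = exp (20 * ∑ j ∈ Icc 4 r, (j : ℝ) ^ (-α)) := by rw [← exp_sum, mul_sum]
    _ ≤ exp (20 * ∑ j ∈ Icc 1 r, (j : ℝ) ^ (-α)) := by
        refine exp_le_exp.2 (mul_le_mul_of_nonneg_left ?_ (by norm_num))
        exact sum_le_sum_of_subset_of_nonneg (Icc_subset_Icc_left (by norm_num))
          fun _ _ _ => by positivity
    _ ≤ exp (20 * ((r : ℝ) ^ (1 - α) / (1 - α))) := by
        gcongr
        exact sum_Icc_rpow_neg_le (by linarith) hα1 r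
    _ = exp (20 / (1 - α) * (r : ℝ) ^ (1 - α)) := by ring_nf

/-- **Prime product bound.** Let `p_j` denote the `j`-th prime (`p_1 = 2`). There is an
absolute constant `C > 0` such that for all `α ∈ (log 2 / log 3, 1)` and all
integers `r ≥ 4`, `∏_{j=4}^r (1 - 2 p_j^{-α})^{-2} ≤ exp((C/(1-α)) r^{1-α})`. -/
theorem stmt6 :
    ∃ C : ℝ, 0 < C ∧
      ∀ α : ℝ, Real.log 2 / Real.log 3 < α → α < 1 →
        ∀ r : ℕ, 4 ≤ r →
          ∏ j ∈ Finset.Icc 4 r,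
              ((1 - 2 * (Nat.nth Nat.Prime (j - 1) : ℝ) ^ (-α))⁻¹) ^ 2
            ≤ Real.exp (C / (1 - α) * (r : ℝ) ^ (1 - α)) :=
  ⟨20, by norm_num, fun _ hα hα1 r _ =>
    prod_Icc_inv_one_sub_two_mul_nth_prime_rpow_sq_le
      (half_lt_log_two_div_log_three.trans hα).le hα1 r⟩
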